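/- The coefficient of the operator R equals the coefficient of the operator S plus an explicitly regular remainder: for all indices l, k ∈ {1,…,n}, on U one has Σ_{m,n,p,q} g^{n̄m} R^{l̄p}_{mq̄} R^{q̄k}_{pn̄} = Σ_{m,n,p,q,s,t} g_{mn̄} (∂̄_q g^{l̄s})(∂_s g^{n̄p})(∂̄_t g^{q̄m})(∂_p g^{t̄k}) + Σ_{m,n,p,q} g^{n̄m} (∂_m ∂̄_q g^{l̄p})(∂_p ∂̄_n g^{q̄k}) − Σ_{m,p,q,t} (∂_m ∂̄_q g^{l̄p})(∂̄_t g^{q̄m})(∂_p g^{t̄k}) − Σ_{m,n,p,q} (∂̄_q g^{l̄m})(∂_m g^{n̄p})(∂_p ∂̄_n g^{q̄k}). In particular R − S is a regular operator (part of Proposition 1). -/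

import Mathlib

open scoped BigOperators

noncomputable section

/-- The `k`-th standard basis vector of `ℂⁿ`. -/
def ebasis (n : ℕ) (k : Fin n) : Fin n → ℂ := Pi.single k 1

/-- The holomorphic Wirtinger derivative `∂ₖ f`, computed via the real Fréchet derivative:
`∂ₖ f (z) = (1/2) (Df(z)(eₖ) - i · Df(z)(i·eₖ))`. -/
def wdP (n : ℕ) (k : Fin n) (f : (Fin n → ℂ) → ℂ) : (Fin n → ℂ) → ℂ :=
  fun z => (1 / 2 : ℂ) *
    (fderiv ℝ f z (ebasis n k) - Complex.I * fderiv ℝ f z (Complex.I • ebasis n k))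

/-- The antiholomorphic Wirtinger derivative `∂̄ₖ f`:
`∂̄ₖ f (z) = (1/2) (Df(z)(eₖ) + i · Df(z)(i·eₖ))`. -/
def wdB (n : ℕ) (k : Fin n) (f : (Fin n → ℂ) → ℂ) : (Fin n → ℂ) → ℂ :=
  fun z => (1 / 2 : ℂ) *
    (fderiv ℝ f z (ebasis n k) + Complex.I * fderiv ℝ f z (Complex.I • ebasis n k))

/-- The Kähler potential viewed as a complex valued function. -/
def Phic (n : ℕ) (Φ : (Fin n → ℂ) → ℝ) : (Fin n → ℂ) → ℂ := fun z => (Φ z : ℂ)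

/-- The metric `g_{k l̄} = ∂_k ∂̄_l Φ`. -/
def gdn (n : ℕ) (Φ : (Fin n → ℂ) → ℝ) (k l : Fin n) : (Fin n → ℂ) → ℂ :=
  wdP n k (wdB n l (Phic n Φ))

/-- `g_{k p t̄} = ∂_k ∂_p ∂̄_t Φ`. -/
def g3h (n : ℕ) (Φ : (Fin n → ℂ) → ℝ) (k p t : Fin n) : (Fin n → ℂ) → ℂ :=
  wdP n k (wdP n p (wdB n t (Phic n Φ)))

/-- `g_{s q̄ l̄} = ∂_s ∂̄_q ∂̄_l Φ`. -/
def g3a (n : ℕ) (Φ : (Fin n → ℂ) → ℝ) (s q l : Fin n) : (Fin n → ℂ) → ℂ :=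
  wdP n s (wdB n q (wdB n l (Phic n Φ)))

/-- `g_{a b̄ k l̄} = ∂_a ∂_k ∂̄_b ∂̄_l Φ`. -/
def g4 (n : ℕ) (Φ : (Fin n → ℂ) → ℝ) (a b k l : Fin n) : (Fin n → ℂ) → ℂ :=
  wdP n a (wdP n k (wdB n b (wdB n l (Phic n Φ))))

/-- `R^{q̄p}_{k l̄} = ∂_k ∂̄_l g^{q̄p} - Σ_{m,n} (∂̄_l g^{q̄m})(∂_k g^{n̄p}) g_{m n̄}`. -/
def Rcur (n : ℕ) (Φ : (Fin n → ℂ) → ℝ) (ginv : Fin n → Fin n → (Fin n → ℂ) → ℂ)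
    (q p k l : Fin n) : (Fin n → ℂ) → ℂ :=
  fun z => wdP n k (wdB n l (ginv q p)) z
    - ∑ m, ∑ m', wdB n l (ginv q m) z * wdP n k (ginv m' p) z * gdn n Φ m m' z


variable {n : ℕ} {U : Set (Fin n → ℂ)}


/-- directional derivative -/
def dd (v : Fin n → ℂ) (f : (Fin n → ℂ) → ℂ) : (Fin n → ℂ) → ℂ := fun z => fderiv ℝ f z v

lemma diffAt (hU : IsOpen U) {f : (Fin n → ℂ) → ℂ} (hf : ContDiffOn ℝ (⊤ : ℕ∞) f U)
    {z : Fin n → ℂ} (hz : z ∈ U) : DifferentiableAt ℝ f z :=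
  (hf.differentiableOn (by simp)).differentiableAt (hU.mem_nhds hz)

lemma dd_smooth (hU : IsOpen U) {f : (Fin n → ℂ) → ℂ} (hf : ContDiffOn ℝ (⊤ : ℕ∞) f U)
    (v : Fin n → ℂ) : ContDiffOn ℝ (⊤ : ℕ∞) (dd v f) U :=
  (hf.fderiv_of_isOpen hU (by simp)).clm_apply contDiffOn_const

lemma dd_congr (hU : IsOpen U) {f g : (Fin n → ℂ) → ℂ} (h : ∀ y ∈ U, f y = g y)
    {z : Fin n → ℂ} (hz : z ∈ U) (v : Fin n → ℂ) : dd v f z = dd v g z := by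
  have he : f =ᶠ[nhds z] g := Filter.eventuallyEq_of_mem (hU.mem_nhds hz) h
  simp only [dd, he.fderiv_eq]

lemma dd_const (c : ℂ) (v : Fin n → ℂ) (z : Fin n → ℂ) : dd v (fun _ => c) z = 0 := by
  simp [dd]

lemma dd_comm (hU : IsOpen U) {f : (Fin n → ℂ) → ℂ} (hf : ContDiffOn ℝ (⊤ : ℕ∞) f U)
    {z : Fin n → ℂ} (hz : z ∈ U) (v w : Fin n → ℂ) :
    dd v (dd w f) z = dd w (dd v f) z := by
  have hg : ContDiffOn ℝ (⊤ : ℕ∞) (fderiv ℝ f) U := hf.fderiv_of_isOpen hU (by simp)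
  have hgd : DifferentiableAt ℝ (fderiv ℝ f) z :=
    (hg.differentiableOn (by simp)).differentiableAt (hU.mem_nhds hz)
  set f'' := fderiv ℝ (fderiv ℝ f) z with hf''
  have hx : HasFDerivAt (fderiv ℝ f) f'' z := hgd.hasFDerivAt
  have hev : ∀ᶠ y in nhds z, HasFDerivAt f (fderiv ℝ f y) y := by
    filter_upwards [hU.mem_nhds hz] with y hy
    exact (diffAt hU hf hy).hasFDerivAt
  have hsymm := second_derivative_symmetric_of_eventually hev hx
  have key : ∀ u : Fin n → ℂ, fderiv ℝ (fun y => fderiv ℝ f y u) z =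
      ((ContinuousLinearMap.apply ℝ ℂ u).comp f'') := by
    intro u
    exact (((ContinuousLinearMap.apply ℝ ℂ u).hasFDerivAt).comp z hx).fderiv
  show fderiv ℝ (fun y => fderiv ℝ f y w) z v = fderiv ℝ (fun y => fderiv ℝ f y v) z w
  rw [key w, key v]
  simpa using hsymm v w

/-- A general first-order operator of the form `c₁ D_{u₁} + c₂ D_{u₂}`. -/
def lop (c₁ c₂ : ℂ) (u₁ u₂ : Fin n → ℂ) (f : (Fin n → ℂ) → ℂ) : (Fin n → ℂ) → ℂ :=
  fun z => c₁ * dd u₁ f z + c₂ * dd u₂ f z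

variable {c₁ c₂ d₁ d₂ : ℂ} {u₁ u₂ w₁ w₂ : Fin n → ℂ}

lemma lop_smooth (hU : IsOpen U) {f : (Fin n → ℂ) → ℂ} (hf : ContDiffOn ℝ (⊤ : ℕ∞) f U) :
    ContDiffOn ℝ (⊤ : ℕ∞) (lop c₁ c₂ u₁ u₂ f) U :=
  (contDiffOn_const.mul (dd_smooth hU hf u₁)).add (contDiffOn_const.mul (dd_smooth hU hf u₂))

lemma lop_congr (hU : IsOpen U) {f g : (Fin n → ℂ) → ℂ} (h : ∀ y ∈ U, f y = g y)
    {z : Fin n → ℂ} (hz : z ∈ U) : lop c₁ c₂ u₁ u₂ f z = lop c₁ c₂ u₁ u₂ g z := by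
  simp only [lop, dd_congr hU h hz]

lemma lop_const (c : ℂ) (z : Fin n → ℂ) : lop c₁ c₂ u₁ u₂ (fun _ => c) z = 0 := by
  simp [lop, dd_const]

lemma dd_add_mul {f g : (Fin n → ℂ) → ℂ} {z : Fin n → ℂ} (hf : DifferentiableAt ℝ f z)
    (hg : DifferentiableAt ℝ g z) (a b : ℂ) (v : Fin n → ℂ) :
    dd v (fun y => a * f y + b * g y) z = a * dd v f z + b * dd v g z := by
  simp only [dd]
  rw [fderiv_fun_add (hf.const_mul a) (hg.const_mul b), fderiv_const_mul hf a,
    fderiv_const_mul hg b]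
  simp

lemma dd_mul {f g : (Fin n → ℂ) → ℂ} {z : Fin n → ℂ} (hf : DifferentiableAt ℝ f z)
    (hg : DifferentiableAt ℝ g z) (v : Fin n → ℂ) :
    dd v (fun y => f y * g y) z = dd v f z * g z + f z * dd v g z := by
  simp only [dd]
  rw [fderiv_fun_mul hf hg]
  simp [mul_comm, add_comm]

lemma dd_lop (hU : IsOpen U) {f : (Fin n → ℂ) → ℂ} (hf : ContDiffOn ℝ (⊤ : ℕ∞) f U)
    {z : Fin n → ℂ} (hz : z ∈ U) (v : Fin n → ℂ) :
    dd v (lop c₁ c₂ u₁ u₂ f) z = c₁ * dd v (dd u₁ f) z + c₂ * dd v (dd u₂ f) z :=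
  dd_add_mul (diffAt hU (dd_smooth hU hf u₁) hz) (diffAt hU (dd_smooth hU hf u₂) hz) c₁ c₂ v

lemma lop_comm (hU : IsOpen U) {f : (Fin n → ℂ) → ℂ} (hf : ContDiffOn ℝ (⊤ : ℕ∞) f U)
    {z : Fin n → ℂ} (hz : z ∈ U) :
    lop c₁ c₂ u₁ u₂ (lop d₁ d₂ w₁ w₂ f) z = lop d₁ d₂ w₁ w₂ (lop c₁ c₂ u₁ u₂ f) z := by
  simp only [lop]
  rw [dd_lop hU hf hz u₁, dd_lop hU hf hz u₂, dd_lop hU hf hz w₁, dd_lop hU hf hz w₂,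
    dd_comm hU hf hz u₁ w₁, dd_comm hU hf hz u₁ w₂, dd_comm hU hf hz u₂ w₁,
    dd_comm hU hf hz u₂ w₂]
  ring

lemma lop_mul {f g : (Fin n → ℂ) → ℂ} (hf : DifferentiableAt ℝ f z)
    (hg : DifferentiableAt ℝ g z) :
    lop c₁ c₂ u₁ u₂ (fun y => f y * g y) z
      = lop c₁ c₂ u₁ u₂ f z * g z + f z * lop c₁ c₂ u₁ u₂ g z := by
  simp only [lop, dd_mul hf hg]
  ring

lemma lop_sum {ι : Type*} [Fintype ι] {f : ι → (Fin n → ℂ) → ℂ} {z : Fin n → ℂ}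
    (hf : ∀ i, DifferentiableAt ℝ (f i) z) :
    lop c₁ c₂ u₁ u₂ (fun y => ∑ i, f i y) z = ∑ i, lop c₁ c₂ u₁ u₂ (f i) z := by
  simp only [lop, dd]
  rw [fderiv_fun_sum (fun i _ => hf i)]
  simp [Finset.mul_sum, Finset.sum_add_distrib]

lemma wdP_eq (k : Fin n) (f : (Fin n → ℂ) → ℂ) :
    wdP n k f = lop (1/2) (-(1/2) * Complex.I) (ebasis n k) (Complex.I • ebasis n k) f :=
  funext fun z => by simp only [wdP, lop, dd]; ring

lemma wdB_eq (k : Fin n) (f : (Fin n → ℂ) → ℂ) :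
    wdB n k f = lop (1/2) ((1/2) * Complex.I) (ebasis n k) (Complex.I • ebasis n k) f :=
  funext fun z => by simp only [wdB, lop, dd]; ring

lemma wdP_smooth (hU : IsOpen U) {f : (Fin n → ℂ) → ℂ} (hf : ContDiffOn ℝ (⊤ : ℕ∞) f U) (k : Fin n) :
    ContDiffOn ℝ (⊤ : ℕ∞) (wdP n k f) U := by rw [wdP_eq]; exact lop_smooth hU hf

lemma wdB_smooth (hU : IsOpen U) {f : (Fin n → ℂ) → ℂ} (hf : ContDiffOn ℝ (⊤ : ℕ∞) f U) (k : Fin n) :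
    ContDiffOn ℝ (⊤ : ℕ∞) (wdB n k f) U := by rw [wdB_eq]; exact lop_smooth hU hf

lemma wdP_congr (hU : IsOpen U) {f g : (Fin n → ℂ) → ℂ} (h : ∀ y ∈ U, f y = g y)
    {z : Fin n → ℂ} (hz : z ∈ U) (k : Fin n) : wdP n k f z = wdP n k g z := by
  rw [wdP_eq, wdP_eq]; exact lop_congr hU h hz

lemma wdB_congr (hU : IsOpen U) {f g : (Fin n → ℂ) → ℂ} (h : ∀ y ∈ U, f y = g y)
    {z : Fin n → ℂ} (hz : z ∈ U) (k : Fin n) : wdB n k f z = wdB n k g z := by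
  rw [wdB_eq, wdB_eq]; exact lop_congr hU h hz

lemma wdP_const (k : Fin n) (c : ℂ) (z : Fin n → ℂ) : wdP n k (fun _ => c) z = 0 := by
  rw [wdP_eq]; exact lop_const c z

lemma wdB_const (k : Fin n) (c : ℂ) (z : Fin n → ℂ) : wdB n k (fun _ => c) z = 0 := by
  rw [wdB_eq]; exact lop_const c z

lemma wdP_mul {f g : (Fin n → ℂ) → ℂ} {z : Fin n → ℂ} (hf : DifferentiableAt ℝ f z)
    (hg : DifferentiableAt ℝ g z) (k : Fin n) :
    wdP n k (fun y => f y * g y) z = wdP n k f z * g z + f z * wdP n k g z := by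
  rw [wdP_eq, wdP_eq, wdP_eq]; exact lop_mul hf hg

lemma wdB_mul {f g : (Fin n → ℂ) → ℂ} {z : Fin n → ℂ} (hf : DifferentiableAt ℝ f z)
    (hg : DifferentiableAt ℝ g z) (k : Fin n) :
    wdB n k (fun y => f y * g y) z = wdB n k f z * g z + f z * wdB n k g z := by
  rw [wdB_eq, wdB_eq, wdB_eq]; exact lop_mul hf hg

lemma wdP_sum {ι : Type*} [Fintype ι] {f : ι → (Fin n → ℂ) → ℂ} {z : Fin n → ℂ}
    (hf : ∀ i, DifferentiableAt ℝ (f i) z) (k : Fin n) :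
    wdP n k (fun y => ∑ i, f i y) z = ∑ i, wdP n k (f i) z := by
  simp only [wdP_eq]; exact lop_sum hf

lemma wdB_sum {ι : Type*} [Fintype ι] {f : ι → (Fin n → ℂ) → ℂ} {z : Fin n → ℂ}
    (hf : ∀ i, DifferentiableAt ℝ (f i) z) (k : Fin n) :
    wdB n k (fun y => ∑ i, f i y) z = ∑ i, wdB n k (f i) z := by
  simp only [wdB_eq]; exact lop_sum hf

lemma wdP_wdP_comm (hU : IsOpen U) {f : (Fin n → ℂ) → ℂ} (hf : ContDiffOn ℝ (⊤ : ℕ∞) f U)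
    {z : Fin n → ℂ} (hz : z ∈ U) (a b : Fin n) :
    wdP n a (wdP n b f) z = wdP n b (wdP n a f) z := by
  simp only [wdP_eq]; exact lop_comm hU hf hz

lemma wdP_wdB_comm (hU : IsOpen U) {f : (Fin n → ℂ) → ℂ} (hf : ContDiffOn ℝ (⊤ : ℕ∞) f U)
    {z : Fin n → ℂ} (hz : z ∈ U) (a b : Fin n) :
    wdP n a (wdB n b f) z = wdB n b (wdP n a f) z := by
  simp only [wdP_eq, wdB_eq]; exact lop_comm hU hf hz

lemma wdB_wdB_comm (hU : IsOpen U) {f : (Fin n → ℂ) → ℂ} (hf : ContDiffOn ℝ (⊤ : ℕ∞) f U)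
    {z : Fin n → ℂ} (hz : z ∈ U) (a b : Fin n) :
    wdB n a (wdB n b f) z = wdB n b (wdB n a f) z := by
  simp only [wdB_eq]; exact lop_comm hU hf hz

lemma phic_smooth {Φ : (Fin n → ℂ) → ℝ} (hΦ : ContDiffOn ℝ (⊤ : ℕ∞) Φ U) :
    ContDiffOn ℝ (⊤ : ℕ∞) (Phic n Φ) U :=
  Complex.ofRealCLM.contDiff.comp_contDiffOn hΦ

lemma gdn_smooth (hU : IsOpen U) {Φ : (Fin n → ℂ) → ℝ} (hΦ : ContDiffOn ℝ (⊤ : ℕ∞) Φ U)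
    (s t : Fin n) : ContDiffOn ℝ (⊤ : ℕ∞) (gdn n Φ s t) U :=
  wdP_smooth hU (wdB_smooth hU (phic_smooth hΦ) t) s

section main

variable (hU : IsOpen U) {Φ : (Fin n → ℂ) → ℝ} (hΦ : ContDiffOn ℝ (⊤ : ℕ∞) Φ U)
  {ginv : Fin n → Fin n → (Fin n → ℂ) → ℂ}
  (hginv : ∀ l k : Fin n, ContDiffOn ℝ (⊤ : ℕ∞) (ginv l k) U)
  (hinv1 : ∀ z ∈ U, ∀ l q : Fin n,
      (∑ k, ginv l k z * gdn n Φ k q z) = if l = q then 1 else 0)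
  (hinv2 : ∀ z ∈ U, ∀ p k : Fin n,
      (∑ l, gdn n Φ p l z * ginv l k z) = if p = k then 1 else 0)

include hU hΦ hginv

lemma K1 (hinv1 : ∀ z ∈ U, ∀ l q : Fin n,
      (∑ k, ginv l k z * gdn n Φ k q z) = if l = q then 1 else 0)
    {z : Fin n → ℂ} (hz : z ∈ U) (q t : Fin n) :
    ∑ s, lop c₁ c₂ u₁ u₂ (ginv q s) z * gdn n Φ s t z
      = -∑ s, ginv q s z * lop c₁ c₂ u₁ u₂ (gdn n Φ s t) z := by
  have h1 : lop c₁ c₂ u₁ u₂ (fun y => ∑ s, ginv q s y * gdn n Φ s t y) z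
      = ∑ s, (lop c₁ c₂ u₁ u₂ (ginv q s) z * gdn n Φ s t z
          + ginv q s z * lop c₁ c₂ u₁ u₂ (gdn n Φ s t) z) := by
    rw [lop_sum (fun s => (diffAt hU (hginv q s) hz).fun_mul
      (diffAt hU (gdn_smooth hU hΦ s t) hz))]
    exact Finset.sum_congr rfl fun s _ =>
      lop_mul (diffAt hU (hginv q s) hz) (diffAt hU (gdn_smooth hU hΦ s t) hz)
  have h2 : lop c₁ c₂ u₁ u₂ (fun y => ∑ s, ginv q s y * gdn n Φ s t y) z = 0 := by
    rw [lop_congr hU (fun y hy => hinv1 y hy q t) hz]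
    exact lop_const _ z
  rw [h1, Finset.sum_add_distrib] at h2
  linear_combination h2

lemma K2 (hinv2 : ∀ z ∈ U, ∀ p k : Fin n,
      (∑ l, gdn n Φ p l z * ginv l k z) = if p = k then 1 else 0)
    {z : Fin n → ℂ} (hz : z ∈ U) (p k : Fin n) :
    ∑ s, lop c₁ c₂ u₁ u₂ (gdn n Φ p s) z * ginv s k z
      = -∑ s, gdn n Φ p s z * lop c₁ c₂ u₁ u₂ (ginv s k) z := by
  have h1 : lop c₁ c₂ u₁ u₂ (fun y => ∑ s, gdn n Φ p s y * ginv s k y) z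
      = ∑ s, (lop c₁ c₂ u₁ u₂ (gdn n Φ p s) z * ginv s k z
          + gdn n Φ p s z * lop c₁ c₂ u₁ u₂ (ginv s k) z) := by
    rw [lop_sum (fun s => (diffAt hU (gdn_smooth hU hΦ p s) hz).fun_mul
      (diffAt hU (hginv s k) hz))]
    exact Finset.sum_congr rfl fun s _ =>
      lop_mul (diffAt hU (gdn_smooth hU hΦ p s) hz) (diffAt hU (hginv s k) hz)
  have h2 : lop c₁ c₂ u₁ u₂ (fun y => ∑ s, gdn n Φ p s y * ginv s k y) z = 0 := by
    rw [lop_congr hU (fun y hy => hinv2 y hy p k) hz]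
    exact lop_const _ z
  rw [h1, Finset.sum_add_distrib] at h2
  linear_combination h2

lemma K1B (hinv1 : ∀ z ∈ U, ∀ l q : Fin n,
      (∑ k, ginv l k z * gdn n Φ k q z) = if l = q then 1 else 0)
    {z : Fin n → ℂ} (hz : z ∈ U) (j q t : Fin n) :
    ∑ s, wdB n j (ginv q s) z * gdn n Φ s t z
      = -∑ s, ginv q s z * wdB n j (gdn n Φ s t) z := by
  simp only [wdB_eq]; exact K1 hU hΦ hginv hinv1 hz q t

lemma K1P (hinv1 : ∀ z ∈ U, ∀ l q : Fin n,
      (∑ k, ginv l k z * gdn n Φ k q z) = if l = q then 1 else 0)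
    {z : Fin n → ℂ} (hz : z ∈ U) (j q t : Fin n) :
    ∑ s, wdP n j (ginv q s) z * gdn n Φ s t z
      = -∑ s, ginv q s z * wdP n j (gdn n Φ s t) z := by
  simp only [wdP_eq]; exact K1 hU hΦ hginv hinv1 hz q t

lemma K2B (hinv2 : ∀ z ∈ U, ∀ p k : Fin n,
      (∑ l, gdn n Φ p l z * ginv l k z) = if p = k then 1 else 0)
    {z : Fin n → ℂ} (hz : z ∈ U) (j p k : Fin n) :
    ∑ s, wdB n j (gdn n Φ p s) z * ginv s k z
      = -∑ s, gdn n Φ p s z * wdB n j (ginv s k) z := by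
  simp only [wdB_eq]; exact K2 hU hΦ hginv hinv2 hz p k

lemma K2P (hinv2 : ∀ z ∈ U, ∀ p k : Fin n,
      (∑ l, gdn n Φ p l z * ginv l k z) = if p = k then 1 else 0)
    {z : Fin n → ℂ} (hz : z ∈ U) (j p k : Fin n) :
    ∑ s, wdP n j (gdn n Φ p s) z * ginv s k z
      = -∑ s, gdn n Φ p s z * wdP n j (ginv s k) z := by
  simp only [wdP_eq]; exact K2 hU hΦ hginv hinv2 hz p k

end main

section symm

variable (hU : IsOpen U) {Φ : (Fin n → ℂ) → ℝ} (hΦ : ContDiffOn ℝ (⊤ : ℕ∞) Φ U)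

include hU hΦ

/-- `∂̄ⱼ g_{s t̄} = ∂̄ₜ g_{s j̄}`. -/
lemma HS1 {z : Fin n → ℂ} (hz : z ∈ U) (j s t : Fin n) :
    wdB n j (gdn n Φ s t) z = wdB n t (gdn n Φ s j) z := by
  have hp := phic_smooth hΦ
  unfold gdn
  rw [← wdP_wdB_comm hU (wdB_smooth hU hp t) hz s j,
    ← wdP_wdB_comm hU (wdB_smooth hU hp j) hz s t]
  exact wdP_congr hU (fun y hy => wdB_wdB_comm hU hp hy j t) hz s

/-- `∂ⱼ g_{s t̄} = ∂ₛ g_{j t̄}`. -/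
lemma HS2 {z : Fin n → ℂ} (hz : z ∈ U) (j s t : Fin n) :
    wdP n j (gdn n Φ s t) z = wdP n s (gdn n Φ j t) z := by
  exact wdP_wdP_comm hU (wdB_smooth hU (phic_smooth hΦ) t) hz j s

end symm

section contraction

variable (hU : IsOpen U) {Φ : (Fin n → ℂ) → ℝ} (hΦ : ContDiffOn ℝ (⊤ : ℕ∞) Φ U)
  {ginv : Fin n → Fin n → (Fin n → ℂ) → ℂ}
  (hginv : ∀ l k : Fin n, ContDiffOn ℝ (⊤ : ℕ∞) (ginv l k) U)
  (hinv1 : ∀ z ∈ U, ∀ l q : Fin n,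
      (∑ k, ginv l k z * gdn n Φ k q z) = if l = q then 1 else 0)
  (hinv2 : ∀ z ∈ U, ∀ p k : Fin n,
      (∑ l, gdn n Φ p l z * ginv l k z) = if p = k then 1 else 0)

include hU hΦ hginv hinv1 hinv2

lemma E1 {z : Fin n → ℂ} (hz : z ∈ U) (m q t : Fin n) :
    ∑ m', ginv m' m z * (∑ s, wdB n m' (ginv q s) z * gdn n Φ s t z)
      = wdB n t (ginv q m) z := by
  have step1 : ∀ m' : Fin n, (∑ s, wdB n m' (ginv q s) z * gdn n Φ s t z)
      = -∑ s, ginv q s z * wdB n t (gdn n Φ s m') z := by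
    intro m'
    rw [K1B hU hΦ hginv hinv1 hz m' q t]
    congr 1
    exact Finset.sum_congr rfl fun s _ => by rw [HS1 hU hΦ hz m' s t]
  calc ∑ m', ginv m' m z * (∑ s, wdB n m' (ginv q s) z * gdn n Φ s t z)
      = ∑ m', ∑ s, -(ginv q s z * (wdB n t (gdn n Φ s m') z * ginv m' m z)) := by
        refine Finset.sum_congr rfl fun m' _ => ?_
        rw [step1 m', mul_neg, Finset.mul_sum, neg_eq_iff_eq_neg, ← Finset.sum_neg_distrib]
        exact Finset.sum_congr rfl fun s _ => by ring
    _ = ∑ s, ginv q s z * -(∑ m', wdB n t (gdn n Φ s m') z * ginv m' m z) := by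
        rw [Finset.sum_comm]
        exact Finset.sum_congr rfl fun s _ => by
          rw [mul_neg, Finset.mul_sum, ← Finset.sum_neg_distrib]
    _ = ∑ s, ginv q s z * ∑ m', gdn n Φ s m' z * wdB n t (ginv m' m) z := by
        refine Finset.sum_congr rfl fun s _ => ?_
        rw [K2B hU hΦ hginv hinv2 hz t s m, neg_neg]
    _ = ∑ m', (∑ s, ginv q s z * gdn n Φ s m' z) * wdB n t (ginv m' m) z := by
        simp only [Finset.mul_sum, Finset.sum_mul]
        rw [Finset.sum_comm]
        exact Finset.sum_congr rfl fun s _ => Finset.sum_congr rfl fun m' _ => by ring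
    _ = wdB n t (ginv q m) z := by
        simp only [hinv1 z hz q]
        simp

lemma E3 {z : Fin n → ℂ} (hz : z ∈ U) (s m p : Fin n) :
    ∑ b, gdn n Φ s b z * wdP n m (ginv b p) z
      = ∑ b, gdn n Φ m b z * wdP n s (ginv b p) z := by
  have h1 : ∑ b, gdn n Φ s b z * wdP n m (ginv b p) z
      = -∑ b, wdP n m (gdn n Φ s b) z * ginv b p z := by
    rw [K2P hU hΦ hginv hinv2 hz m s p]; simp
  rw [h1]
  have h2 : ∀ b : Fin n, wdP n m (gdn n Φ s b) z = wdP n s (gdn n Φ m b) z := by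
    intro b
    rw [HS2 hU hΦ hz m s b, HS2 hU hΦ hz s m b]
  calc -∑ b, wdP n m (gdn n Φ s b) z * ginv b p z
      = -∑ b, wdP n s (gdn n Φ m b) z * ginv b p z := by
        congr 1; exact Finset.sum_congr rfl fun b _ => by rw [h2 b]
    _ = ∑ b, gdn n Φ m b z * wdP n s (ginv b p) z := by
        rw [K2P hU hΦ hginv hinv2 hz s m p]; simp

lemma E2 {z : Fin n → ℂ} (hz : z ∈ U) (a m' p : Fin n) :
    ∑ m, ginv m' m z * (∑ b, gdn n Φ a b z * wdP n m (ginv b p) z)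
      = wdP n a (ginv m' p) z := by
  have step1 : ∀ m : Fin n, (∑ b, gdn n Φ a b z * wdP n m (ginv b p) z)
      = -∑ b, wdP n a (gdn n Φ m b) z * ginv b p z := by
    intro m
    have h1 : ∑ b, gdn n Φ a b z * wdP n m (ginv b p) z
        = -∑ b, wdP n m (gdn n Φ a b) z * ginv b p z := by
      rw [K2P hU hΦ hginv hinv2 hz m a p]; simp
    rw [h1]
    congr 1
    exact Finset.sum_congr rfl fun b _ => by
      rw [HS2 hU hΦ hz m a b, HS2 hU hΦ hz a m b]
  calc ∑ m, ginv m' m z * (∑ b, gdn n Φ a b z * wdP n m (ginv b p) z)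
      = ∑ b, -(∑ m, ginv m' m z * wdP n a (gdn n Φ m b) z) * ginv b p z := by
        calc ∑ m, ginv m' m z * (∑ b, gdn n Φ a b z * wdP n m (ginv b p) z)
            = ∑ m, ∑ b, -(ginv m' m z * wdP n a (gdn n Φ m b) z * ginv b p z) := by
              refine Finset.sum_congr rfl fun m _ => ?_
              rw [step1 m, mul_neg, Finset.mul_sum, ← Finset.sum_neg_distrib]
              exact Finset.sum_congr rfl fun b _ => by ring
          _ = ∑ b, (-∑ m, ginv m' m z * wdP n a (gdn n Φ m b) z) * ginv b p z := by
              rw [Finset.sum_comm]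
              refine Finset.sum_congr rfl fun b _ => ?_
              rw [neg_mul, Finset.sum_mul, ← Finset.sum_neg_distrib]
    _ = ∑ b, (∑ m, wdP n a (ginv m' m) z * gdn n Φ m b z) * ginv b p z := by
        refine Finset.sum_congr rfl fun b _ => ?_
        congr 1
        have := K1P hU hΦ hginv hinv1 hz a m' b
        linear_combination -this
    _ = ∑ m, wdP n a (ginv m' m) z * (∑ b, gdn n Φ m b z * ginv b p z) := by
        simp only [Finset.sum_mul, Finset.mul_sum]
        rw [Finset.sum_comm]
        exact Finset.sum_congr rfl fun m _ => Finset.sum_congr rfl fun b _ => by ring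
    _ = wdP n a (ginv m' p) z := by
        simp only [hinv2 z hz]
        simp


lemma LAS {z : Fin n → ℂ} (hz : z ∈ U) (l k : Fin n) :
    ∑ m, ∑ m', ∑ p, ∑ q, ginv m' m z * wdP n m (wdB n q (ginv l p)) z *
        (∑ s, ∑ t, wdB n m' (ginv q s) z * wdP n p (ginv t k) z * gdn n Φ s t z)
      = ∑ m, ∑ p, ∑ q, ∑ t,
          wdP n m (wdB n q (ginv l p)) z * wdB n t (ginv q m) z * wdP n p (ginv t k) z := by
  refine Finset.sum_congr rfl fun m _ => ?_
  rw [Finset.sum_comm]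
  refine Finset.sum_congr rfl fun p _ => ?_
  rw [Finset.sum_comm]
  refine Finset.sum_congr rfl fun q _ => ?_
  -- goal: ∑ m', F * A1 * S2(m') = ∑ t, A1 * wdB t (ginv q m) * wdP p (ginv t k)
  have hS2 : ∀ m' : Fin n,
      (∑ s, ∑ t, wdB n m' (ginv q s) z * wdP n p (ginv t k) z * gdn n Φ s t z)
        = ∑ t, (∑ s, wdB n m' (ginv q s) z * gdn n Φ s t z) * wdP n p (ginv t k) z := by
    intro m'
    rw [Finset.sum_comm]
    refine Finset.sum_congr rfl fun t _ => ?_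
    rw [Finset.sum_mul]
    exact Finset.sum_congr rfl fun s _ => by ring
  calc ∑ m', ginv m' m z * wdP n m (wdB n q (ginv l p)) z *
        (∑ s, ∑ t, wdB n m' (ginv q s) z * wdP n p (ginv t k) z * gdn n Φ s t z)
      = ∑ m', ∑ t, wdP n m (wdB n q (ginv l p)) z *
          (ginv m' m z * (∑ s, wdB n m' (ginv q s) z * gdn n Φ s t z)
            * wdP n p (ginv t k) z) := by
        refine Finset.sum_congr rfl fun m' _ => ?_
        rw [hS2 m', Finset.mul_sum]
        exact Finset.sum_congr rfl fun t _ => by ring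
    _ = ∑ t, wdP n m (wdB n q (ginv l p)) z *
          ((∑ m', ginv m' m z * (∑ s, wdB n m' (ginv q s) z * gdn n Φ s t z))
            * wdP n p (ginv t k) z) := by
        rw [Finset.sum_comm]
        refine Finset.sum_congr rfl fun t _ => ?_
        simp only [Finset.mul_sum, Finset.sum_mul]
    _ = ∑ t, wdP n m (wdB n q (ginv l p)) z * wdB n t (ginv q m) z * wdP n p (ginv t k) z := by
        refine Finset.sum_congr rfl fun t _ => ?_
        rw [E1 hU hΦ hginv hinv1 hinv2 hz m q t]
        ring

lemma LSA {z : Fin n → ℂ} (hz : z ∈ U) (l k : Fin n) :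
    ∑ m, ∑ m', ∑ p, ∑ q, ginv m' m z *
        (∑ a, ∑ b, wdB n q (ginv l a) z * wdP n m (ginv b p) z * gdn n Φ a b z) *
        wdP n p (wdB n m' (ginv q k)) z
      = ∑ m, ∑ m', ∑ p, ∑ q, wdB n q (ginv l m) z * wdP n m (ginv m' p) z *
          wdP n p (wdB n m' (ginv q k)) z := by
  have key : ∀ m' p q : Fin n,
      ∑ m, ginv m' m z *
          (∑ a, ∑ b, wdB n q (ginv l a) z * wdP n m (ginv b p) z * gdn n Φ a b z) *
          wdP n p (wdB n m' (ginv q k)) z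
        = ∑ a, wdB n q (ginv l a) z * wdP n a (ginv m' p) z *
            wdP n p (wdB n m' (ginv q k)) z := by
    intro m' p q
    have hS1 : ∀ m : Fin n,
        (∑ a, ∑ b, wdB n q (ginv l a) z * wdP n m (ginv b p) z * gdn n Φ a b z)
          = ∑ a, wdB n q (ginv l a) z * (∑ b, gdn n Φ a b z * wdP n m (ginv b p) z) := by
      intro m
      refine Finset.sum_congr rfl fun a _ => ?_
      rw [Finset.mul_sum]
      exact Finset.sum_congr rfl fun b _ => by ring
    calc ∑ m, ginv m' m z *
          (∑ a, ∑ b, wdB n q (ginv l a) z * wdP n m (ginv b p) z * gdn n Φ a b z) *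
          wdP n p (wdB n m' (ginv q k)) z
        = ∑ a, wdB n q (ginv l a) z *
            (∑ m, ginv m' m z * (∑ b, gdn n Φ a b z * wdP n m (ginv b p) z)) *
            wdP n p (wdB n m' (ginv q k)) z := by
          simp only [hS1, Finset.mul_sum, Finset.sum_mul]
          rw [Finset.sum_comm]
          exact Finset.sum_congr rfl fun a _ => Finset.sum_congr rfl fun m _ =>
            Finset.sum_congr rfl fun b _ => by ring
      _ = ∑ a, wdB n q (ginv l a) z * wdP n a (ginv m' p) z *
            wdP n p (wdB n m' (ginv q k)) z := by
          refine Finset.sum_congr rfl fun a _ => ?_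
          rw [E2 hU hΦ hginv hinv1 hinv2 hz a m' p]
  calc ∑ m, ∑ m', ∑ p, ∑ q, ginv m' m z *
        (∑ a, ∑ b, wdB n q (ginv l a) z * wdP n m (ginv b p) z * gdn n Φ a b z) *
        wdP n p (wdB n m' (ginv q k)) z
      = ∑ m', ∑ p, ∑ q, ∑ a, wdB n q (ginv l a) z * wdP n a (ginv m' p) z *
          wdP n p (wdB n m' (ginv q k)) z := by
        rw [Finset.sum_comm]
        refine Finset.sum_congr rfl fun m' _ => ?_
        rw [Finset.sum_comm]
        refine Finset.sum_congr rfl fun p _ => ?_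
        rw [Finset.sum_comm]
        refine Finset.sum_congr rfl fun q _ => ?_
        exact key m' p q
    _ = ∑ m', ∑ p, ∑ a, ∑ q, wdB n q (ginv l a) z * wdP n a (ginv m' p) z *
          wdP n p (wdB n m' (ginv q k)) z := by
        exact Finset.sum_congr rfl fun m' _ => Finset.sum_congr rfl fun p _ => Finset.sum_comm
    _ = ∑ m', ∑ a, ∑ p, ∑ q, wdB n q (ginv l a) z * wdP n a (ginv m' p) z *
          wdP n p (wdB n m' (ginv q k)) z := by
        exact Finset.sum_congr rfl fun m' _ => Finset.sum_comm
    _ = ∑ a, ∑ m', ∑ p, ∑ q, wdB n q (ginv l a) z * wdP n a (ginv m' p) z *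
          wdP n p (wdB n m' (ginv q k)) z := Finset.sum_comm


lemma FS2 {z : Fin n → ℂ} (hz : z ∈ U) (k m p q : Fin n) :
    ∑ m', ginv m' m z *
        (∑ s, ∑ t, wdB n m' (ginv q s) z * wdP n p (ginv t k) z * gdn n Φ s t z)
      = ∑ t, wdB n t (ginv q m) z * wdP n p (ginv t k) z := by
  have hS2 : ∀ m' : Fin n,
      (∑ s, ∑ t, wdB n m' (ginv q s) z * wdP n p (ginv t k) z * gdn n Φ s t z)
        = ∑ t, (∑ s, wdB n m' (ginv q s) z * gdn n Φ s t z) * wdP n p (ginv t k) z := by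
    intro m'
    rw [Finset.sum_comm]
    refine Finset.sum_congr rfl fun t _ => ?_
    rw [Finset.sum_mul]
    exact Finset.sum_congr rfl fun s _ => by ring
  calc ∑ m', ginv m' m z *
        (∑ s, ∑ t, wdB n m' (ginv q s) z * wdP n p (ginv t k) z * gdn n Φ s t z)
      = ∑ t, (∑ m', ginv m' m z * (∑ s, wdB n m' (ginv q s) z * gdn n Φ s t z)) *
          wdP n p (ginv t k) z := by
        simp only [hS2, Finset.mul_sum, Finset.sum_mul]
        rw [Finset.sum_comm]
        exact Finset.sum_congr rfl fun t _ => Finset.sum_congr rfl fun m' _ =>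
          Finset.sum_congr rfl fun s _ => by ring
    _ = ∑ t, wdB n t (ginv q m) z * wdP n p (ginv t k) z := by
        refine Finset.sum_congr rfl fun t _ => ?_
        rw [E1 hU hΦ hginv hinv1 hinv2 hz m q t]

lemma LSS {z : Fin n → ℂ} (hz : z ∈ U) (l k : Fin n) :
    ∑ m, ∑ m', ∑ p, ∑ q, ginv m' m z *
        (∑ a, ∑ b, wdB n q (ginv l a) z * wdP n m (ginv b p) z * gdn n Φ a b z) *
        (∑ s, ∑ t, wdB n m' (ginv q s) z * wdP n p (ginv t k) z * gdn n Φ s t z)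
      = ∑ m, ∑ m', ∑ p, ∑ q, ∑ s, ∑ t,
          gdn n Φ m m' z * wdB n q (ginv l s) z * wdP n s (ginv m' p) z *
            wdB n t (ginv q m) z * wdP n p (ginv t k) z := by
  refine Finset.sum_congr rfl fun m _ => ?_
  have key : ∀ p q : Fin n,
      ∑ m', ginv m' m z *
          (∑ a, ∑ b, wdB n q (ginv l a) z * wdP n m (ginv b p) z * gdn n Φ a b z) *
          (∑ s, ∑ t, wdB n m' (ginv q s) z * wdP n p (ginv t k) z * gdn n Φ s t z)
        = (∑ a, ∑ b, wdB n q (ginv l a) z * wdP n m (ginv b p) z * gdn n Φ a b z) *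
            (∑ t, wdB n t (ginv q m) z * wdP n p (ginv t k) z) := by
    intro p q
    rw [← FS2 hU hΦ hginv hinv1 hinv2 hz k m p q, Finset.mul_sum]
    exact Finset.sum_congr rfl fun m' _ => by ring
  have hS1 : ∀ p q : Fin n,
      (∑ a, ∑ b, wdB n q (ginv l a) z * wdP n m (ginv b p) z * gdn n Φ a b z)
        = ∑ a, ∑ b, wdB n q (ginv l a) z * (gdn n Φ m b z * wdP n a (ginv b p) z) := by
    intro p q
    calc (∑ a, ∑ b, wdB n q (ginv l a) z * wdP n m (ginv b p) z * gdn n Φ a b z)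
        = ∑ a, wdB n q (ginv l a) z * (∑ b, gdn n Φ a b z * wdP n m (ginv b p) z) := by
          refine Finset.sum_congr rfl fun a _ => ?_
          rw [Finset.mul_sum]
          exact Finset.sum_congr rfl fun b _ => by ring
      _ = ∑ a, wdB n q (ginv l a) z * (∑ b, gdn n Φ m b z * wdP n a (ginv b p) z) := by
          refine Finset.sum_congr rfl fun a _ => ?_
          rw [E3 hU hΦ hginv hinv1 hinv2 hz a m p]
      _ = ∑ a, ∑ b, wdB n q (ginv l a) z * (gdn n Φ m b z * wdP n a (ginv b p) z) := by
          exact Finset.sum_congr rfl fun a _ => Finset.mul_sum ..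
  calc ∑ m', ∑ p, ∑ q, ginv m' m z *
        (∑ a, ∑ b, wdB n q (ginv l a) z * wdP n m (ginv b p) z * gdn n Φ a b z) *
        (∑ s, ∑ t, wdB n m' (ginv q s) z * wdP n p (ginv t k) z * gdn n Φ s t z)
      = ∑ p, ∑ q, ∑ a, ∑ b, ∑ t,
          gdn n Φ m b z * wdB n q (ginv l a) z * wdP n a (ginv b p) z *
            wdB n t (ginv q m) z * wdP n p (ginv t k) z := by
        rw [Finset.sum_comm]
        refine Finset.sum_congr rfl fun p _ => ?_
        rw [Finset.sum_comm]
        refine Finset.sum_congr rfl fun q _ => ?_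
        rw [key p q, hS1 p q, Finset.sum_mul]
        refine Finset.sum_congr rfl fun a _ => ?_
        rw [Finset.sum_mul]
        refine Finset.sum_congr rfl fun b _ => ?_
        rw [Finset.mul_sum]
        exact Finset.sum_congr rfl fun t _ => by ring
    _ = ∑ p, ∑ q, ∑ b, ∑ a, ∑ t,
          gdn n Φ m b z * wdB n q (ginv l a) z * wdP n a (ginv b p) z *
            wdB n t (ginv q m) z * wdP n p (ginv t k) z := by
        exact Finset.sum_congr rfl fun p _ => Finset.sum_congr rfl fun q _ => Finset.sum_comm
    _ = ∑ p, ∑ b, ∑ q, ∑ a, ∑ t,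
          gdn n Φ m b z * wdB n q (ginv l a) z * wdP n a (ginv b p) z *
            wdB n t (ginv q m) z * wdP n p (ginv t k) z := by
        exact Finset.sum_congr rfl fun p _ => Finset.sum_comm
    _ = ∑ b, ∑ p, ∑ q, ∑ a, ∑ t,
          gdn n Φ m b z * wdB n q (ginv l a) z * wdP n a (ginv b p) z *
            wdB n t (ginv q m) z * wdP n p (ginv t k) z := Finset.sum_comm

end contraction

/-- the coefficient of `R` equals the coefficient of `S` plus an explicitly
regular remainder, on `U`. -/
theorem stmt_5 (n : ℕ) (hn : 1 ≤ n) (U : Set (Fin n → ℂ)) (hU : IsOpen U)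
    (Φ : (Fin n → ℂ) → ℝ) (hΦ : ContDiffOn ℝ (⊤ : ℕ∞) Φ U)
    (ginv : Fin n → Fin n → (Fin n → ℂ) → ℂ)
    (hginv : ∀ l k : Fin n, ContDiffOn ℝ (⊤ : ℕ∞) (ginv l k) U)
    (hinv1 : ∀ z ∈ U, ∀ l q : Fin n,
      (∑ k, ginv l k z * gdn n Φ k q z) = if l = q then 1 else 0)
    (hinv2 : ∀ z ∈ U, ∀ p k : Fin n,
      (∑ l, gdn n Φ p l z * ginv l k z) = if p = k then 1 else 0) :
    ∀ z ∈ U, ∀ l k : Fin n,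
      (∑ m, ∑ m', ∑ p, ∑ q,
          ginv m' m z * Rcur n Φ ginv l p m q z * Rcur n Φ ginv q k p m' z)
        = (∑ m, ∑ m', ∑ p, ∑ q, ∑ s, ∑ t,
            gdn n Φ m m' z * wdB n q (ginv l s) z * wdP n s (ginv m' p) z *
              wdB n t (ginv q m) z * wdP n p (ginv t k) z)
          + (∑ m, ∑ m', ∑ p, ∑ q,
              ginv m' m z * wdP n m (wdB n q (ginv l p)) z * wdP n p (wdB n m' (ginv q k)) z)
          - (∑ m, ∑ p, ∑ q, ∑ t,
              wdP n m (wdB n q (ginv l p)) z * wdB n t (ginv q m) z * wdP n p (ginv t k) z)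
          - (∑ m, ∑ m', ∑ p, ∑ q,
              wdB n q (ginv l m) z * wdP n m (ginv m' p) z * wdP n p (wdB n m' (ginv q k)) z) := by
  intro z hz l k
  have expand : (∑ m, ∑ m', ∑ p, ∑ q,
        ginv m' m z * Rcur n Φ ginv l p m q z * Rcur n Φ ginv q k p m' z)
      = ((∑ m, ∑ m', ∑ p, ∑ q,
            ginv m' m z * wdP n m (wdB n q (ginv l p)) z * wdP n p (wdB n m' (ginv q k)) z)
        - (∑ m, ∑ m', ∑ p, ∑ q, ginv m' m z * wdP n m (wdB n q (ginv l p)) z *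
            (∑ s, ∑ t, wdB n m' (ginv q s) z * wdP n p (ginv t k) z * gdn n Φ s t z))
        - (∑ m, ∑ m', ∑ p, ∑ q, ginv m' m z *
            (∑ a, ∑ b, wdB n q (ginv l a) z * wdP n m (ginv b p) z * gdn n Φ a b z) *
            wdP n p (wdB n m' (ginv q k)) z))
        + (∑ m, ∑ m', ∑ p, ∑ q, ginv m' m z *
            (∑ a, ∑ b, wdB n q (ginv l a) z * wdP n m (ginv b p) z * gdn n Φ a b z) *
            (∑ s, ∑ t, wdB n m' (ginv q s) z * wdP n p (ginv t k) z * gdn n Φ s t z)) := by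
    calc (∑ m, ∑ m', ∑ p, ∑ q,
          ginv m' m z * Rcur n Φ ginv l p m q z * Rcur n Φ ginv q k p m' z)
        = ∑ m, ∑ m', ∑ p, ∑ q,
            (ginv m' m z * wdP n m (wdB n q (ginv l p)) z * wdP n p (wdB n m' (ginv q k)) z
            - ginv m' m z * wdP n m (wdB n q (ginv l p)) z *
                (∑ s, ∑ t, wdB n m' (ginv q s) z * wdP n p (ginv t k) z * gdn n Φ s t z)
            - ginv m' m z *
                (∑ a, ∑ b, wdB n q (ginv l a) z * wdP n m (ginv b p) z * gdn n Φ a b z) *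
                wdP n p (wdB n m' (ginv q k)) z
            + ginv m' m z *
                (∑ a, ∑ b, wdB n q (ginv l a) z * wdP n m (ginv b p) z * gdn n Φ a b z) *
                (∑ s, ∑ t, wdB n m' (ginv q s) z * wdP n p (ginv t k) z * gdn n Φ s t z)) := by
          refine Finset.sum_congr rfl fun m _ => Finset.sum_congr rfl fun m' _ =>
            Finset.sum_congr rfl fun p _ => Finset.sum_congr rfl fun q _ => ?_
          simp only [Rcur]
          ring
      _ = _ := by
          simp only [Finset.sum_sub_distrib, Finset.sum_add_distrib]
  rw [expand, LAS hU hΦ hginv hinv1 hinv2 hz l k, LSA hU hΦ hginv hinv1 hinv2 hz l k,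
    LSS hU hΦ hginv hinv1 hinv2 hz l k]
  ring
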